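/- arXiv:1802.09937 — 5 statements merged into one kernel-verified Lean document; each statement's English description precedes it below -/
import Mathlib

section
/- Let 0 ≤ α < 1 and let f = h + conj(g) belong to the class F(α), with power series h(z) = z + Σ_{k≥2} a_k z^k on 𝔻. Then for every n ≥ 2, |a_n| ≤ A_n(α), where A_n(α) = (1/n!)·∏_{j=2}^{n} (j − 2α). -/
open Complex Metric ComplexConjugate

/-- `L(r,α) = ∫₀^r (1−ρ)(1+ρ)^{2α−2} dρ`. -/
noncomputable def Lfun (r α : ℝ) : ℝ := ∫ ρ in (0:ℝ)..r, (1 - ρ) * (1 + ρ) ^ (2 * α - 2)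

/-- `A(r,α) = ((1−r²)/r²)·L(r,α)²`. -/
noncomputable def Afun (r α : ℝ) : ℝ := ((1 - r ^ 2) / r ^ 2) * (Lfun r α) ^ 2

/-- `A_k(α) = (1/k!)·∏_{j=2}^k (j − 2α)`. -/
noncomputable def coefA (α : ℝ) (k : ℕ) : ℝ :=
  (1 / (Nat.factorial k : ℝ)) * ∏ j ∈ Finset.Icc 2 k, ((j : ℝ) - 2 * α)

/-- `ψ(n,m,r,α)`. -/
noncomputable def psiFun (n m : ℕ) (r α : ℝ) : ℝ :=
  Afun r α
    - ∑' k : ℕ, (((n : ℝ) + 1 + k) * coefA α (n + 1 + k) * r ^ (n + k))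
    - ∑' k : ℕ, ((((m : ℝ) + 1 + k) * (((m : ℝ) + 1 + k) - 1) / (((m : ℝ) + 1 + k) - 2 * α))
        * coefA α (m + 1 + k) * r ^ (m + k))

/-- Membership in the class `F(α)`. -/
def MemF (α : ℝ) (h g : ℂ → ℂ) : Prop :=
  DifferentiableOn ℂ h (ball 0 1) ∧ DifferentiableOn ℂ g (ball 0 1) ∧
  h 0 = 0 ∧ g 0 = 0 ∧ deriv h 0 = 1 ∧
  (∀ z ∈ ball (0 : ℂ) 1, deriv h z ≠ 0) ∧
  (∀ z ∈ ball (0 : ℂ) 1, α < (1 + z * deriv (deriv h) z / deriv h z).re) ∧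
  (∃ θ : ℝ, ∀ z ∈ ball (0 : ℂ) 1, deriv g z = Complex.exp (θ * Complex.I) * z * deriv h z)

/-!
With `p = z h''/h'`, convexity of order `α` says `Re (p + 1 - α) > 0`, and `p 0 = 0`, so
Carathéodory's lemma bounds every Taylor coefficient `p_k`, `k ≥ 1`, by `2 (1 - α)`.
Comparing coefficients in `z h'' = p h'` gives `(m + 1) c_{m+1} = ∑_{i ≤ m} p_{i+1} c_{m-i}` for
the coefficients `c_m` of `h'`, so `|c_m|` is dominated by the solution of the same recursion with
every `p_k` replaced by `2 (1 - α)`; that solution is `(m + 1) A_{m+1}(α)`, the coefficient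
sequence of the extremal `(1 - z)^{2α-2}`. Finally `a_{m+1} = c_m / (m + 1)`.
Carathéodory's lemma itself comes from the circle averages at radius `r < 1`:
`r^k p_k = avg (z⁻ᵏ p) = avg (z⁻ᵏ · 2 Re p)` because `avg (z⁻ᵏ · conj p) = 0`.
-/

open Filter Topology Finset
open scoped Nat

noncomputable def taylorCoeff (f : ℂ → ℂ) (n : ℕ) : ℂ := iteratedDeriv n f 0 / n !

@[simp]
lemma taylorCoeff_zero (f : ℂ → ℂ) : taylorCoeff f 0 = f 0 := by
  simp [taylorCoeff]

lemma taylorCoeff_deriv (f : ℂ → ℂ) (n : ℕ) :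
    taylorCoeff (deriv f) n = (n + 1) * taylorCoeff f (n + 1) := by
  rw [taylorCoeff, taylorCoeff, ← iteratedDeriv_succ', Nat.factorial_succ]
  push_cast
  field_simp

lemma taylorCoeff_const_add {n : ℕ} (hn : n ≠ 0) (c : ℂ) (f : ℂ → ℂ) :
    taylorCoeff (fun z => c + f z) n = taylorCoeff f n := by
  rw [taylorCoeff, taylorCoeff, iteratedDeriv_const_add (Nat.pos_of_ne_zero hn)]

lemma taylorCoeff_mul {f g : ℂ → ℂ} {n : ℕ} (hf : ContDiffAt ℂ n f 0) (hg : ContDiffAt ℂ n g 0) :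
    taylorCoeff (f * g) n = ∑ i ∈ range (n + 1), taylorCoeff f i * taylorCoeff g (n - i) := by
  rw [taylorCoeff, iteratedDeriv_mul hf hg, sum_div]
  refine sum_congr rfl fun i hi => ?_
  rw [taylorCoeff, taylorCoeff, Nat.cast_choose ℂ (Nat.lt_succ_iff.mp (mem_range.mp hi))]
  field_simp [Nat.factorial_ne_zero]

lemma taylorCoeff_id_mul {F : ℂ → ℂ} {n : ℕ} (hF : ContDiffAt ℂ (n + 1) F 0) :
    taylorCoeff (fun z => z * F z) (n + 1) = taylorCoeff F n := by
  have hid : ∀ i, taylorCoeff (fun z => z) i = if i = 1 then 1 else 0 := by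
    intro i
    rw [taylorCoeff, iteratedDeriv_fun_id_zero]
    split_ifs with h <;> simp [h]
  rw [show (fun z => z * F z) = (fun z => z) * F from rfl,
    taylorCoeff_mul (by fun_prop) (by exact_mod_cast hF), sum_eq_single 1]
  · simp [hid]
  · intro i _ hi; simp [hid, hi]
  · intro h; simp at h

lemma eq_taylorCoeff_of_hasSum {f : ℂ → ℂ} {a : ℕ → ℂ} {r : NNReal} (hr : 0 < r)
    (hf : ∀ z ∈ ball (0 : ℂ) r, HasSum (fun k => a k * z ^ k) (f z)) :
    a = taylorCoeff f := by
  have hps : HasFPowerSeriesOnBall f (FormalMultilinearSeries.ofScalars ℂ a) 0 r := by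
    refine ⟨ENNReal.le_of_forall_nnreal_lt fun s hs => ?_, by exact_mod_cast hr, fun hy => ?_⟩
    · apply FormalMultilinearSeries.le_radius_of_tendsto (l := 0)
      have hs' : ((s : ℝ) : ℂ) ∈ ball (0 : ℂ) r := by
        simpa using (show (s : ℝ) < r by exact_mod_cast hs)
      simpa [FormalMultilinearSeries.ofScalars_norm] using
        (hf _ hs').summable.tendsto_atTop_zero.norm
    · rw [zero_add]
      simp only [FormalMultilinearSeries.ofScalars_apply_eq, smul_eq_mul]
      exact hf _ (by simpa using hy)
  funext n
  have := hps.factorial_smul 1 n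
  rw [FormalMultilinearSeries.ofScalars_apply_eq, ← iteratedDeriv_eq_iteratedFDeriv] at this
  rw [taylorCoeff, ← this]
  simp [field, Nat.factorial_ne_zero]

open Real in
lemma norm_circleAverage_le {E : Type*} [NormedAddCommGroup E] [NormedSpace ℝ E]
    (f : ℂ → E) (c : ℂ) (R : ℝ) :
    ‖circleAverage f c R‖ ≤ circleAverage (fun z => ‖f z‖) c R := by
  rw [circleAverage, circleAverage, norm_smul, smul_eq_mul, Real.norm_of_nonneg (by positivity)]
  gcongr
  exact intervalIntegral.norm_integral_le_integral_norm two_pi_pos.le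

section Caratheodory

open Real Set

variable {q : ℂ → ℂ} {r : ℝ}

lemma circleAverage_inv_pow_mul_eq_taylorCoeff (hq : DifferentiableOn ℂ q (closedBall 0 r))
    (hr : 0 < r) (k : ℕ) :
    circleAverage (fun z => (z ^ k)⁻¹ * q z) 0 r = taylorCoeff q k := by
  rw [circleAverage_eq_circleIntegral hr.ne']
  have hcauchy := hq.circleIntegral_one_div_sub_center_pow_smul hr k
  simp only [sub_zero, smul_eq_mul] at hcauchy ⊢
  have hintegrand : (fun z : ℂ => z⁻¹ * ((z ^ k)⁻¹ * q z)) = fun z => 1 / z ^ (k + 1) * q z := by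
    ext z
    rw [pow_succ', one_div, mul_inv, mul_assoc]
  rw [hintegrand, hcauchy, taylorCoeff]
  field_simp [two_pi_I_ne_zero]

lemma circleAverage_inv_pow_mul_conj_eq_zero (hq : DifferentiableOn ℂ q (closedBall 0 r))
    (hr : 0 < r) {k : ℕ} (hk : k ≠ 0) :
    circleAverage (fun z => (z ^ k)⁻¹ * conj (q z)) 0 r = 0 := by
  have hmean : circleAverage (fun z => z ^ k * q z) 0 r = 0 := by
    rw [DiffContOnCl.circleAverage (f := fun z => z ^ k * q z)]
    · simp [hk]
    rw [abs_of_pos hr]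
    exact (((differentiableOn_pow k).mul hq).mono closure_ball_subset_closedBall).diffContOnCl
  have hsphere : EqOn (fun z => (z ^ k)⁻¹ * conj (q z))
      (fun z => ((r ^ (2 * k))⁻¹ : ℝ) • conjCLE (z ^ k * q z)) (sphere 0 |r|) := by
    intro z hz
    have hz' : z * conj z = (r : ℂ) ^ 2 := by
      rw [mul_conj, normSq_eq_norm_sq, mem_sphere_zero_iff_norm.mp hz, sq_abs]
      push_cast
      rfl
    have hz0 : conj z ≠ 0 := by
      rw [map_ne_zero, ← norm_ne_zero_iff, mem_sphere_zero_iff_norm.mp hz]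
      positivity
    simp only [conjCLE_apply, map_mul, map_pow, Complex.real_smul, ofReal_inv, ofReal_pow]
    rw [pow_mul, ← hz', mul_pow]
    field_simp
  have hcont : ContinuousOn (fun z => z ^ k * q z) (sphere 0 r) :=
    ((continuous_pow k).continuousOn.mul hq.continuousOn).mono sphere_subset_closedBall
  rw [circleAverage_congr_sphere hsphere, circleAverage_fun_smul,
    show (fun z => conjCLE (z ^ k * q z)) = (conjCLE : ℂ →L[ℝ] ℂ) ∘ (fun z => z ^ k * q z) from rfl,
    (conjCLE : ℂ →L[ℝ] ℂ).circleAverage_comp_comm (hcont.circleIntegrable hr.le)]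
  simp [hmean]

lemma norm_taylorCoeff_mul_pow_le (hq : DifferentiableOn ℂ q (closedBall 0 r)) (hr : 0 < r)
    (hre : ∀ z ∈ sphere (0 : ℂ) r, 0 ≤ (q z).re) {k : ℕ} (hk : k ≠ 0) :
    ‖taylorCoeff q k‖ * r ^ k ≤ 2 * (q 0).re := by
  have hq' : ContinuousOn q (sphere 0 r) := hq.continuousOn.mono sphere_subset_closedBall
  have hinv : ContinuousOn (fun z : ℂ => (z ^ k)⁻¹) (sphere 0 r) := by
    refine (continuous_pow k).continuousOn.inv₀ fun z hz => pow_ne_zero k ?_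
    rw [← norm_ne_zero_iff, mem_sphere_zero_iff_norm.mp hz]
    exact hr.ne'
  have hsum : taylorCoeff q k =
      circleAverage (fun z => (z ^ k)⁻¹ * (2 * (q z).re : ℂ)) 0 r := by
    calc taylorCoeff q k
        = circleAverage (fun z => (z ^ k)⁻¹ * q z) 0 r
          + circleAverage (fun z => (z ^ k)⁻¹ * conj (q z)) 0 r := by
          rw [circleAverage_inv_pow_mul_conj_eq_zero hq hr hk, add_zero,
            circleAverage_inv_pow_mul_eq_taylorCoeff hq hr k]
      _ = circleAverage (fun z => (z ^ k)⁻¹ * q z + (z ^ k)⁻¹ * conj (q z)) 0 r :=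
          (circleAverage_fun_add ((hinv.mul hq').circleIntegrable hr.le)
            ((hinv.mul (continuous_conj.comp_continuousOn hq')).circleIntegrable hr.le)).symm
      _ = _ := by
          congr 1
          ext z
          rw [← mul_add, add_conj]
          push_cast
          ring
  have hmean : circleAverage (fun z => (q z).re) 0 r = (q 0).re := by
    rw [show (fun z => (q z).re) = (reCLM : ℂ →L[ℝ] ℝ) ∘ q from rfl,
      reCLM.circleAverage_comp_comm (hq'.circleIntegrable hr.le),
      DiffContOnCl.circleAverage]
    · rfl
    rw [abs_of_pos hr]
    exact (hq.mono closure_ball_subset_closedBall).diffContOnCl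
  have hnorm : EqOn (fun z => ‖(z ^ k)⁻¹ * (2 * (q z).re : ℂ)‖)
      (fun z => ((r ^ k)⁻¹ * 2) • (q z).re) (sphere 0 |r|) := by
    intro z hz
    rw [abs_of_pos hr] at hz
    have hz' := mem_sphere_zero_iff_norm.mp hz
    simp only [norm_mul, norm_inv, norm_pow, hz', smul_eq_mul, Complex.norm_ofNat, norm_real,
      Real.norm_of_nonneg (hre z hz)]
    ring
  calc ‖taylorCoeff q k‖ * r ^ k
      ≤ circleAverage (fun z => ‖(z ^ k)⁻¹ * (2 * (q z).re : ℂ)‖) 0 r * r ^ k := by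
        rw [hsum]
        gcongr
        exact norm_circleAverage_le _ _ _
    _ = 2 * (q 0).re := by
        rw [circleAverage_congr_sphere hnorm, circleAverage_fun_smul, hmean, smul_eq_mul]
        field_simp

theorem norm_taylorCoeff_le_of_re_nonneg (hq : DifferentiableOn ℂ q (ball 0 1))
    (hre : ∀ z ∈ ball (0 : ℂ) 1, 0 ≤ (q z).re) {k : ℕ} (hk : k ≠ 0) :
    ‖taylorCoeff q k‖ ≤ 2 * (q 0).re := by
  have hlim : Tendsto (fun r : ℝ => ‖taylorCoeff q k‖ * r ^ k) (𝓝[<] 1) (𝓝 ‖taylorCoeff q k‖) := by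
    refine (Continuous.tendsto' ?_ 1 _ (by simp)).mono_left nhdsWithin_le_nhds
    fun_prop
  refine le_of_tendsto hlim ?_
  filter_upwards [Ioo_mem_nhdsLT zero_lt_one] with r hr
  exact norm_taylorCoeff_mul_pow_le (hq.mono (closedBall_subset_ball hr.2)) hr.1
    (fun z hz => hre z (sphere_subset_ball hr.2 hz)) hk

end Caratheodory

lemma norm_le_of_majorant_recursion {c w : ℕ → ℂ} {B : ℕ → ℝ} {M : ℝ} (hc₀ : ‖c 0‖ ≤ B 0)
    (hw : ∀ k, ‖w k‖ ≤ M)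
    (hc : ∀ m, (m + 1) * c (m + 1) = ∑ i ∈ range (m + 1), w i * c (m - i))
    (hB : ∀ m, (m + 1) * B (m + 1) = M * ∑ j ∈ range (m + 1), B j) (m : ℕ) :
    ‖c m‖ ≤ B m := by
  induction m using Nat.strong_induction_on with
  | _ m ih =>
    rcases m with _ | m
    · exact hc₀
    have hM : 0 ≤ M := (norm_nonneg _).trans (hw 0)
    have hbound : ((m : ℝ) + 1) * ‖c (m + 1)‖ ≤ (m + 1) * B (m + 1) := by
      calc ((m : ℝ) + 1) * ‖c (m + 1)‖ = ‖∑ i ∈ range (m + 1), w i * c (m - i)‖ := by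
            rw [← hc, norm_mul]
            norm_cast
        _ ≤ ∑ i ∈ range (m + 1), M * B (m - i) := by
            refine (norm_sum_le _ _).trans (sum_le_sum fun i hi => ?_)
            rw [norm_mul]
            exact mul_le_mul (hw i) (ih _ (by omega)) (norm_nonneg _) hM
        _ = (m + 1) * B (m + 1) := by
            have hreflect := sum_range_reflect B (m + 1)
            rw [Nat.add_sub_cancel] at hreflect
            rw [← mul_sum, hreflect, hB]
    exact le_of_mul_le_mul_left hbound (by positivity)

lemma succ_mul_coefA_succ (α : ℝ) {k : ℕ} (hk : k ≠ 0) :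
    ((k : ℝ) + 1) * coefA α (k + 1) = ((k : ℝ) + 1 - 2 * α) * coefA α k := by
  rw [coefA, coefA, prod_Icc_succ_top (by omega), Nat.factorial_succ]
  push_cast
  field_simp

lemma succ_mul_succ_mul_coefA_eq_sum (α : ℝ) (m : ℕ) :
    ((m : ℝ) + 1) * ((((m + 1 : ℕ) : ℝ) + 1) * coefA α (m + 1 + 1))
      = 2 * (1 - α) * ∑ j ∈ range (m + 1), ((j : ℝ) + 1) * coefA α (j + 1) := by
  induction m with
  | zero =>
    norm_num [coefA]
    ring
  | succ m ih =>
    rw [sum_range_succ, mul_add, ← ih, succ_mul_coefA_succ α (k := m + 1 + 1) (by omega)]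
    push_cast
    ring

section ConvexOfOrder

variable {h : ℂ → ℂ} {α : ℝ}

noncomputable def convexityQuotient (h : ℂ → ℂ) (z : ℂ) : ℂ := z * deriv (deriv h) z / deriv h z

@[simp]
lemma convexityQuotient_zero (h : ℂ → ℂ) : convexityQuotient h 0 = 0 := by
  simp [convexityQuotient]

lemma differentiableOn_convexityQuotient (hh : DifferentiableOn ℂ h (ball 0 1))
    (hne : ∀ z ∈ ball (0 : ℂ) 1, deriv h z ≠ 0) :
    DifferentiableOn ℂ (convexityQuotient h) (ball 0 1) :=
  (differentiableOn_id.mul ((hh.deriv isOpen_ball).deriv isOpen_ball)).div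
    (hh.deriv isOpen_ball) hne

lemma norm_taylorCoeff_convexityQuotient_le (hh : DifferentiableOn ℂ h (ball 0 1))
    (hne : ∀ z ∈ ball (0 : ℂ) 1, deriv h z ≠ 0)
    (hconv : ∀ z ∈ ball (0 : ℂ) 1, α < (1 + convexityQuotient h z).re)
    {k : ℕ} (hk : k ≠ 0) :
    ‖taylorCoeff (convexityQuotient h) k‖ ≤ 2 * (1 - α) := by
  have hre : ∀ z ∈ ball (0 : ℂ) 1,
      0 ≤ ((1 - α : ℂ) + convexityQuotient h z).re := by
    intro z hz
    have hz := hconv z hz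
    simp only [add_re, one_re, sub_re, ofReal_re] at hz ⊢
    linarith
  simpa [taylorCoeff_const_add hk] using norm_taylorCoeff_le_of_re_nonneg
    ((differentiableOn_convexityQuotient hh hne).const_add _) hre hk

lemma taylorCoeff_deriv_recursion (hh : DifferentiableOn ℂ h (ball 0 1))
    (hne : ∀ z ∈ ball (0 : ℂ) 1, deriv h z ≠ 0) (m : ℕ) :
    (m + 1) * taylorCoeff (deriv h) (m + 1) =
      ∑ i ∈ range (m + 1),
        taylorCoeff (convexityQuotient h) (i + 1) * taylorCoeff (deriv h) (m - i) := by
  have hball : ball (0 : ℂ) 1 ∈ 𝓝 0 := ball_mem_nhds 0 one_pos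
  have hw := (differentiableOn_convexityQuotient hh hne).analyticAt hball
  have hh' := (hh.deriv isOpen_ball).analyticAt hball
  have hh'' := ((hh.deriv isOpen_ball).deriv isOpen_ball).analyticAt hball
  have heq : (fun z => z * deriv (deriv h) z) =ᶠ[𝓝 0] convexityQuotient h * deriv h := by
    filter_upwards [hball] with z hz
    exact (div_mul_cancel₀ _ (hne z hz)).symm
  rw [← taylorCoeff_deriv, ← taylorCoeff_id_mul hh''.contDiffAt, taylorCoeff,
    heq.iteratedDeriv_eq, ← taylorCoeff, taylorCoeff_mul hw.contDiffAt hh'.contDiffAt,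
    sum_range_succ']
  simp

lemma norm_taylorCoeff_deriv_le_of_convex_order
    (hh : DifferentiableOn ℂ h (ball 0 1)) (hh₁ : deriv h 0 = 1)
    (hne : ∀ z ∈ ball (0 : ℂ) 1, deriv h z ≠ 0)
    (hconv : ∀ z ∈ ball (0 : ℂ) 1, α < (1 + convexityQuotient h z).re) (m : ℕ) :
    ‖taylorCoeff (deriv h) m‖ ≤ (m + 1) * coefA α (m + 1) :=
  norm_le_of_majorant_recursion (B := fun j => ((j : ℝ) + 1) * coefA α (j + 1))
    (by simp [hh₁, coefA])
    (fun k => norm_taylorCoeff_convexityQuotient_le hh hne hconv k.succ_ne_zero)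
    (taylorCoeff_deriv_recursion hh hne) (succ_mul_succ_mul_coefA_eq_sum α) m

end ConvexOfOrder

theorem coeff_bound_analytic_part_general (α : ℝ)
    (h g : ℂ → ℂ) (hf : MemF α h g) (a : ℕ → ℂ)
    (hrep : ∀ z ∈ ball (0 : ℂ) 1, HasSum (fun k : ℕ => a k * z ^ k) (h z)) :
    ∀ n : ℕ, 2 ≤ n → ‖a n‖ ≤ coefA α n := by
  obtain ⟨hh, -, -, -, hh₁, hne, hconv, -⟩ := hf
  rintro (_ | m) hn
  · omega
  have ha : a = taylorCoeff h := eq_taylorCoeff_of_hasSum one_pos (by simpa using hrep)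
  have hbound := norm_taylorCoeff_deriv_le_of_convex_order hh hh₁ hne hconv m
  rw [taylorCoeff_deriv, norm_mul, ← ha] at hbound
  norm_cast at hbound
  exact le_of_mul_le_mul_left hbound (by positivity)

/-- Sharp coefficient bound for the analytic part: `|a_n| ≤ A_n(α)`. -/
theorem coeff_bound_analytic_part (α : ℝ) (hα0 : 0 ≤ α) (hα1 : α < 1)
    (h g : ℂ → ℂ) (hf : MemF α h g) (a : ℕ → ℂ) (ha0 : a 0 = 0) (ha1 : a 1 = 1)
    (hrep : ∀ z ∈ ball (0 : ℂ) 1, HasSum (fun k : ℕ => a k * z ^ k) (h z)) :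
    ∀ n : ℕ, 2 ≤ n → ‖a n‖ ≤ coefA α n :=
  coeff_bound_analytic_part_general α h g hf a hrep
end

section
/- Define h(z) = −log(1−z) and g(z) = −z − log(1−z) on the unit disk 𝔻, where log is the principal branch of the complex logarithm. Then f = h + conj(g) belongs to the class F(1/2) (with θ = 0), and the Taylor coefficients of h and g satisfy a_n = 1/n and b_n = 1/n for all n ≥ 2; in particular |a_n| = A_n(1/2) and |b_n| = ((n−1)/(n−1))·A_n(1/2), so the coefficient bounds |a_n| ≤ A_n(α) and |b_n| ≤ ((n−1)/(n−2α))·A_n(α) are attained at α = 1/2. -/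
/-!
With `h(z) = -log(1 - z)` one has `h' = 1/(1 - z)` and `1 + z h''/h' = 1/(1 - z)`; the Möbius
map `z ↦ 1/(1 - z)` sends the unit disk onto the half-plane `Re w > 1/2`, so `h` is convex of
order `1/2`.
Moreover `g' = h' - 1 = z h'`, the coefficients come from `-log(1 - z) = ∑ zⁿ/n`, and
`A_n(1/2) = (n - 1)!/n! = 1/n` by the recurrence `A_{n+1}(α) = (n + 1 - 2α)/(n + 1) · A_n(α)`.
-/

open Complex Metric ComplexConjugate

open Filter Topology

lemma one_sub_mem_slitPlane {z : ℂ} (hz : z ∈ ball (0 : ℂ) 1) : 1 - z ∈ slitPlane := by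
  simpa [sub_eq_add_neg] using mem_slitPlane_of_norm_lt_one (z := -z) (by simpa using hz)

lemma half_lt_re_inv_one_sub {z : ℂ} (hz : z ∈ ball (0 : ℂ) 1) :
    (1 / 2 : ℝ) < ((1 - z)⁻¹).re := by
  have hpos : 0 < normSq (1 - z) := normSq_pos.mpr (slitPlane_ne_zero (one_sub_mem_slitPlane hz))
  have hnormSq : normSq z < 1 := by
    rw [normSq_eq_norm_sq]
    exact pow_lt_one₀ (norm_nonneg z) (mem_ball_zero_iff.mp hz) two_ne_zero
  rw [normSq_apply] at hnormSq
  rw [inv_re, lt_div_iff₀ hpos]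
  simp only [normSq_apply, sub_re, sub_im, one_re, one_im]
  nlinarith

lemma hasDerivAt_neg_log_one_sub {z : ℂ} (hz : 1 - z ∈ slitPlane) :
    HasDerivAt (fun w => -log (1 - w)) (1 - z)⁻¹ z :=
  (((hasDerivAt_id' z).const_sub 1).clog hz).neg.congr_deriv (by simp [neg_div])

lemma hasDerivAt_neg_sub_log_one_sub {z : ℂ} (hz : 1 - z ∈ slitPlane) :
    HasDerivAt (fun w => -w - log (1 - w)) (z * (1 - z)⁻¹) z := by
  have hne : 1 - z ≠ 0 := slitPlane_ne_zero hz
  exact ((hasDerivAt_neg' z).add (hasDerivAt_neg_log_one_sub hz)).congr_deriv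
    (by field_simp; ring)

lemma deriv_deriv_neg_log_one_sub {z : ℂ} (hz : 1 - z ∈ slitPlane) :
    deriv (deriv fun w => -log (1 - w)) z = ((1 - z) ^ 2)⁻¹ := by
  have hnhds : ∀ᶠ w in 𝓝 z, 1 - w ∈ slitPlane :=
    (continuous_const.sub continuous_id).continuousAt.preimage_mem_nhds
      (isOpen_slitPlane.mem_nhds hz)
  have hderiv : (deriv fun w => -log (1 - w)) =ᶠ[𝓝 z] fun w => (1 - w)⁻¹ :=
    hnhds.mono fun w hw => (hasDerivAt_neg_log_one_sub hw).deriv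
  rw [hderiv.deriv_eq]
  exact (((hasDerivAt_id' z).const_sub 1).inv (slitPlane_ne_zero hz)).deriv.trans (by simp)

lemma hasSum_neg_log_one_sub {z : ℂ} (hz : z ∈ ball (0 : ℂ) 1) :
    HasSum (fun n : ℕ => (if n = 0 then 0 else 1 / (n : ℂ)) * z ^ n) (-log (1 - z)) := by
  refine (hasSum_taylorSeries_neg_log (mem_ball_zero_iff.mp hz)).congr_fun fun n => ?_
  rcases n with _ | n <;> simp [div_eq_inv_mul]

lemma hasSum_neg_sub_log_one_sub {z : ℂ} (hz : z ∈ ball (0 : ℂ) 1) :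
    HasSum (fun n : ℕ => (if n ≤ 1 then 0 else 1 / (n : ℂ)) * z ^ n) (-z - log (1 - z)) := by
  have hupd := (hasSum_neg_log_one_sub hz).update 1 0
  rw [show (0 : ℂ) - (if 1 = 0 then 0 else 1 / ((1 : ℕ) : ℂ)) * z ^ 1 + -log (1 - z)
    = -z - log (1 - z) by simp; ring] at hupd
  refine hupd.congr_fun fun n => ?_
  rcases n with _ | _ | n <;> simp

lemma coefA_succ (α : ℝ) {n : ℕ} (hn : 1 ≤ n) :
    coefA α (n + 1) = (n + 1 - 2 * α) / (n + 1) * coefA α n := by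
  simp only [coefA]
  rw [Finset.prod_Icc_succ_top (by omega), Nat.factorial_succ]
  push_cast
  field_simp

lemma coefA_half {n : ℕ} (hn : 1 ≤ n) : coefA (1 / 2) n = 1 / n := by
  induction n, hn using Nat.le_induction with
  | base => simp [coefA]
  | succ n hn ih =>
    rw [coefA_succ _ hn, ih]
    have : (n : ℝ) ≠ 0 := by positivity
    push_cast
    field_simp
    ring

/-- The extremal function for `α = 1/2`: `h(z) = −log(1−z)`, `g(z) = −z − log(1−z)`.
It belongs to `F(1/2)` (with `θ = 0`), has Taylor coefficients `a_n = b_n = 1/n` for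
`n ≥ 2`, and attains the coefficient bounds. -/
theorem extremal_function_alpha_half
    (h g : ℂ → ℂ)
    (hdef : ∀ z, h z = -Complex.log (1 - z))
    (gdef : ∀ z, g z = -z - Complex.log (1 - z)) :
    (DifferentiableOn ℂ h (ball 0 1) ∧ DifferentiableOn ℂ g (ball 0 1) ∧
      h 0 = 0 ∧ g 0 = 0 ∧ deriv h 0 = 1 ∧
      (∀ z ∈ ball (0 : ℂ) 1, deriv h z ≠ 0) ∧
      (∀ z ∈ ball (0 : ℂ) 1, (1 / 2 : ℝ) < (1 + z * deriv (deriv h) z / deriv h z).re) ∧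
      (∀ z ∈ ball (0 : ℂ) 1,
        deriv g z = Complex.exp ((0 : ℝ) * Complex.I) * z * deriv h z)) ∧
    (∀ z ∈ ball (0 : ℂ) 1,
      HasSum (fun n : ℕ => (if n = 0 then 0 else 1 / (n : ℂ)) * z ^ n) (h z)) ∧
    (∀ z ∈ ball (0 : ℂ) 1,
      HasSum (fun n : ℕ => (if n ≤ 1 then 0 else 1 / (n : ℂ)) * z ^ n) (g z)) ∧
    (∀ n : ℕ, 2 ≤ n →
      ‖(1 / (n : ℂ))‖ = coefA (1 / 2) n ∧
      ‖(1 / (n : ℂ))‖ = (((n : ℝ) - 1) / ((n : ℝ) - 1)) * coefA (1 / 2) n) := by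
  obtain rfl : h = fun z => -log (1 - z) := funext hdef
  obtain rfl : g = fun z => -z - log (1 - z) := funext gdef
  have hslit {z : ℂ} (hz : z ∈ ball (0 : ℂ) 1) := one_sub_mem_slitPlane hz
  have hderiv {z : ℂ} (hz : z ∈ ball (0 : ℂ) 1) := (hasDerivAt_neg_log_one_sub (hslit hz)).deriv
  refine ⟨⟨fun z hz => ?_, fun z hz => ?_, by simp, by simp,
    by simpa using hderiv (mem_ball_self one_pos), fun z hz => ?_, fun z hz => ?_, fun z hz => ?_⟩,
    fun z => hasSum_neg_log_one_sub, fun z => hasSum_neg_sub_log_one_sub, fun n hn => ?_⟩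
  · exact (hasDerivAt_neg_log_one_sub (hslit hz)).differentiableAt.differentiableWithinAt
  · exact (hasDerivAt_neg_sub_log_one_sub (hslit hz)).differentiableAt.differentiableWithinAt
  · simpa [hderiv hz] using slitPlane_ne_zero (hslit hz)
  · have hne := slitPlane_ne_zero (hslit hz)
    have hconvex : 1 + z * ((1 - z) ^ 2)⁻¹ / (1 - z)⁻¹ = (1 - z)⁻¹ := by field_simp; ring
    rw [hderiv hz, deriv_deriv_neg_log_one_sub (hslit hz), hconvex]
    exact half_lt_re_inv_one_sub hz
  · simp [(hasDerivAt_neg_sub_log_one_sub (hslit hz)).deriv, hderiv hz]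
  · have hn1 : (n : ℝ) - 1 ≠ 0 := by
      have : (2 : ℝ) ≤ n := by exact_mod_cast hn
      linarith
    rw [div_self hn1, one_mul, coefA_half (by omega), norm_div, norm_one, norm_natCast]
    exact ⟨rfl, rfl⟩
end

section
/- For every r with 0 < r < 1, one has (1 − r²)·((2·log(1+r) − r)/r)² ≥ (1 − r)/(1 + r)². -/
/-!
Put `y = r / (r + 2)`, so that `log (1 + r) = 2 ∑ y ^ (2k+1) / (2k+1)` has nonnegative terms.
Keeping the first two of them bounds `(2 log (1 + r) - r) / r` below by a rational function of `r`,
and with this bound the inequality becomes the nonnegativity on `[0, 1]` of a polynomial of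
degree eight whose positive low-order coefficients dominate.
-/

open Real

theorem two_mul_add_cube_div_three_le_log_one_add {a : ℝ} (ha : 0 ≤ a) :
    2 * (a / (a + 2) + (a / (a + 2)) ^ 3 / 3) ≤ log (1 + a) := by
  calc 2 * (a / (a + 2) + (a / (a + 2)) ^ 3 / 3)
      = ∑ k ∈ Finset.range 2, 2 * (1 / (2 * (k : ℝ) + 1)) * (a / (a + 2)) ^ (2 * k + 1) := by
        norm_num [Finset.sum_range_succ]
        ring
    _ ≤ log (1 + a) :=
        sum_le_hasSum _ (fun k _ => by positivity) (hasSum_log_one_add ha)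

noncomputable def logRatioLowerBound (r : ℝ) : ℝ :=
  (24 + 12 * r - 2 * r ^ 2 - 3 * r ^ 3) / (3 * (2 + r) ^ 3)

theorem logRatioLowerBound_le {r : ℝ} (hr : 0 < r) :
    logRatioLowerBound r ≤ (2 * log (1 + r) - r) / r := by
  have hlog := two_mul_add_cube_div_three_le_log_one_add hr.le
  have hr2 : r + 2 ≠ 0 := by linarith
  have h : logRatioLowerBound r = (4 * (r / (r + 2) + (r / (r + 2)) ^ 3 / 3) - r) / r := by
    unfold logRatioLowerBound
    field_simp
    ring
  rw [h]
  exact div_le_div_of_nonneg_right (by linarith) hr.le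

theorem logRatioLowerBound_nonneg {r : ℝ} (hr0 : 0 ≤ r) (hr1 : r ≤ 1) :
    0 ≤ logRatioLowerBound r := by
  unfold logRatioLowerBound
  have h2 : r ^ 2 ≤ 1 := pow_le_one₀ hr0 hr1
  have h3 : r ^ 3 ≤ 1 := pow_le_one₀ hr0 hr1
  exact div_nonneg (by linarith) (by positivity)

theorem div_one_add_sq_le_mul_logRatioLowerBound_sq {r : ℝ} (hr0 : 0 ≤ r) (hr1 : r ≤ 1) :
    (1 - r) / (1 + r) ^ 2 ≤ (1 - r ^ 2) * logRatioLowerBound r ^ 2 := by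
  set P := 576 + 1344 * r + 816 * r ^ 2 - 464 * r ^ 3 - 828 * r ^ 4 - 360 * r ^ 5
    - 5 * r ^ 6 + 39 * r ^ 7 + 9 * r ^ 8
  have hPnonneg : 0 ≤ P := by
    have h3 : r ^ 3 ≤ r ^ 2 := pow_le_pow_of_le_one hr0 hr1 (by norm_num)
    have h4 : r ^ 4 ≤ r ^ 3 := pow_le_pow_of_le_one hr0 hr1 (by norm_num)
    have h5 : r ^ 5 ≤ r ^ 3 := pow_le_pow_of_le_one hr0 hr1 (by norm_num)
    have h6 : r ^ 6 ≤ r ^ 3 := pow_le_pow_of_le_one hr0 hr1 (by norm_num)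
    have h2 : r ^ 2 ≤ r := pow_le_of_le_one hr0 hr1 (by norm_num)
    have h7 : 0 ≤ r ^ 7 := by positivity
    have h8 : 0 ≤ r ^ 8 := by positivity
    linarith
  have hdiff : (1 - r ^ 2) * logRatioLowerBound r ^ 2 - (1 - r) / (1 + r) ^ 2
      = (1 - r) * r * P / (9 * (2 + r) ^ 6 * (1 + r) ^ 2) := by
    unfold logRatioLowerBound
    field_simp
    ring
  have hdiff_nonneg : 0 ≤ (1 - r) * r * P / (9 * (2 + r) ^ 6 * (1 + r) ^ 2) := by
    have h1 : 0 ≤ 1 - r := by linarith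
    positivity
  linarith

/-- `(1 − r²)·((2 log(1+r) − r)/r)² ≥ (1 − r)/(1 + r)²` for `0 < r < 1`. -/
theorem A_half_lower_bound (r : ℝ) (hr0 : 0 < r) (hr1 : r < 1) :
    (1 - r ^ 2) * ((2 * Real.log (1 + r) - r) / r) ^ 2 ≥ (1 - r) / (1 + r) ^ 2 := by
  have hr2 : 0 ≤ 1 - r ^ 2 := by nlinarith
  calc (1 - r) / (1 + r) ^ 2 ≤ (1 - r ^ 2) * logRatioLowerBound r ^ 2 :=
        div_one_add_sq_le_mul_logRatioLowerBound_sq hr0.le hr1.le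
    _ ≤ (1 - r ^ 2) * ((2 * log (1 + r) - r) / r) ^ 2 := by
        gcongr
        · exact logRatioLowerBound_nonneg hr0.le hr1.le
        · exact logRatioLowerBound_le hr0
end

section
/- For every integer n ≥ 3, setting r = 1 − (2·log n)/n (which satisfies 0 < r < 1), one has (1 − r)² − 2·(1 + r)²·r^n > 0. -/
set_option maxHeartbeats 1000000 in
/-- For `n ≥ 3` and `r = 1 − (2 log n)/n` one has `0 < r < 1` and
`(1 − r)² − 2(1 + r)²·rⁿ > 0`. -/
theorem positivity_at_radius (n : ℕ) (hn : 3 ≤ n) (r : ℝ)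
    (hr : r = 1 - 2 * Real.log n / n) :
    (0 < r ∧ r < 1) ∧ (1 - r) ^ 2 - 2 * (1 + r) ^ 2 * r ^ n > 0 := by
  have hn3 : (3:ℝ) ≤ (n:ℝ) := by exact_mod_cast hn
  have hnpos : (0:ℝ) < (n:ℝ) := by linarith
  set L := Real.log n with hL
  -- L ≥ 1
  have hL1 : 1 ≤ L := by
    rw [hL, Real.le_log_iff_exp_le hnpos]
    have := Real.exp_one_lt_d9
    linarith
  have hLpos : 0 < L := by linarith
  -- 2L < n
  have hs0 : (0:ℝ) < Real.sqrt n := Real.sqrt_pos.mpr hnpos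
  have hs1 : Real.sqrt n ≠ 1 := by
    intro h
    have : (n:ℝ) = 1 := by
      have := Real.sq_sqrt hnpos.le
      rw [h] at this; simpa using this.symm
    linarith
  have hlog_lt : Real.log (Real.sqrt n) < Real.sqrt n - 1 :=
    Real.log_lt_sub_one_of_pos hs0 hs1
  have hlogs : Real.log (Real.sqrt n) = L / 2 := by
    rw [hL, Real.log_sqrt hnpos.le]
  have hsq : Real.sqrt n ^ 2 = (n:ℝ) := Real.sq_sqrt hnpos.le
  have h2L : 2 * L < (n:ℝ) := by
    nlinarith [sq_nonneg (Real.sqrt n - 2), hlog_lt, hlogs, hsq]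
  have hr0 : 0 < r := by
    rw [hr]
    rw [sub_pos, div_lt_one hnpos]
    linarith
  have hr1 : r < 1 := by
    rw [hr]
    have : 0 < 2 * L / n := by positivity
    linarith
  refine ⟨⟨hr0, hr1⟩, ?_⟩
  -- r^n ≤ 1/n^2
  have hrn : r ^ n ≤ 1 / (n:ℝ) ^ 2 := by
    have h1 : r ≤ Real.exp (-(2 * L / n)) := by
      have := Real.add_one_le_exp (-(2 * L / n))
      rw [hr]; linarith
    have h2 : r ^ n ≤ Real.exp (-(2 * L / n)) ^ n :=
      pow_le_pow_left₀ hr0.le h1 n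
    have h3 : Real.exp (-(2 * L / n)) ^ n = Real.exp (-(2 * L)) := by
      rw [← Real.exp_nat_mul]
      congr 1
      field_simp
    have h4 : Real.exp (-(2 * L)) = 1 / (n:ℝ) ^ 2 := by
      have hexp : Real.exp (2 * L) = (n:ℝ) ^ 2 := by
        rw [show (2:ℝ) * L = L + L from by ring, Real.exp_add, hL,
          Real.exp_log hnpos]
        ring
      rw [Real.exp_neg, hexp, one_div]
    rw [← h4]; exact h2.trans_eq h3
  -- key: 2 L^2 > (1 + r)^2
  have hkey : (1 + r) ^ 2 < 2 * L ^ 2 := by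
    rw [hr]
    rcases eq_or_lt_of_le hn with h3 | h4
    · -- n = 3
      have : (n:ℝ) = 3 := by exact_mod_cast h3.symm
      rw [this]
      nlinarith [hL1]
    · rcases eq_or_lt_of_le (Nat.succ_le_of_lt h4) with h4' | h5
      · -- n = 4
        have hn4 : (n:ℝ) = 4 := by exact_mod_cast h4'.symm
        have hL4 : L = 2 * Real.log 2 := by
          rw [hL, hn4, show (4:ℝ) = 2 ^ 2 by norm_num, Real.log_pow]
          push_cast; ring
        have := Real.log_two_gt_d9
        rw [hn4]
        nlinarith
      · -- n ≥ 5
        have hn5 : (5:ℝ) ≤ (n:ℝ) := by exact_mod_cast Nat.succ_le_of_lt h5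
        have hL5 : (3:ℝ)/2 ≤ L := by
          rw [hL, Real.le_log_iff_exp_le hnpos]
          have e1 : Real.exp 1 < 2.7182818286 := Real.exp_one_lt_d9
          have e1p : (0:ℝ) < Real.exp 1 := Real.exp_pos 1
          have e2 : Real.exp 1 ^ 2 < 7.39 := by nlinarith
          have e3 : Real.exp 1 ^ 3 < 25 := by nlinarith
          have hsq32 : Real.exp (3/2 : ℝ) ^ 2 = Real.exp 1 ^ 3 := by
            rw [← Real.exp_nat_mul, ← Real.exp_nat_mul]; norm_num
          have h32p : (0:ℝ) < Real.exp (3/2 : ℝ) := Real.exp_pos _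
          have h32 : Real.exp (3/2 : ℝ) < 5 := by nlinarith
          linarith
        have ht0 : 0 < 2 * L / n := by positivity
        have ht1 : 2 * L / n < 1 := by rw [div_lt_one hnpos]; linarith
        nlinarith
  -- conclusion
  have h1r : (1 - r) ^ 2 = (2 * L / n) ^ 2 := by rw [hr]; ring
  have hpos : (0:ℝ) < (1 + r) ^ 2 := by positivity
  have hstep : 2 * (1 + r) ^ 2 * r ^ n ≤ 2 * (1 + r) ^ 2 / (n:ℝ) ^ 2 := by
    rw [div_eq_mul_inv]
    have : r ^ n ≤ ((n:ℝ) ^ 2)⁻¹ := by rw [← one_div]; exact hrn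
    nlinarith
  have hfin : 2 * (1 + r) ^ 2 / (n:ℝ) ^ 2 < (2 * L / n) ^ 2 := by
    rw [div_pow, div_lt_div_iff₀ (by positivity) (by positivity)]
    have hmp := mul_pos (show (0:ℝ) < 2 * L ^ 2 - (1 + r) ^ 2 from by linarith)
      (show (0:ℝ) < (n:ℝ) ^ 2 from by positivity)
    nlinarith [hmp]
  have hchain := hstep.trans_lt hfin
  rw [h1r]
  linarith
end

section
/- Let 0 ≤ α < 1 and fix integers n ≥ 2 and m ≥ 2. The function r ↦ ψ(n,m,r,α) has exactly one zero in the open interval (0,1); moreover ψ(n,m,r,α) > 0 for all r in (0, r_{n,m}), where r_{n,m} denotes this zero. -/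
/-!
`ψ(n,m,·,α)` is strictly decreasing on `(0,1)`. Indeed `L(·,α)` is a primitive of the strictly
decreasing integrand `(1-ρ)(1+ρ)^{2α-2}`, hence strictly concave with `L(0,α) = 0`, so `L(r,α)/r`
decreases and with it `A = (1 - r²)(L/r)²`; both series have nonnegative coefficients, so they
increase with `r`. Explicit estimates give `ψ > 0` at `r = 1/10`, and `ψ < 0` near `1`, where
`A ≤ 1 - r²` tends to `0` while the first series stays above its leading term. The intermediate
value theorem produces the zero; strict monotonicity gives its uniqueness and the sign of `ψ`
before it.
-/

open Complex Metric ComplexConjugate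

open Set Filter Topology
open scoped Nat

section AntitoneIntegral

variable {f : ℝ → ℝ} {a b c : ℝ}

theorem integral_le_mul_of_antitoneOn (hf : AntitoneOn f (Icc a b)) (hab : a ≤ b) :
    ∫ x in a..b, f x ≤ (b - a) * f a := by
  have hint : IntervalIntegrable f MeasureTheory.volume a b :=
    (hf.mono (uIcc_of_le hab).subset).intervalIntegrable
  simpa using intervalIntegral.integral_mono_on hab hint intervalIntegrable_const
    fun x hx => hf ⟨le_rfl, hab⟩ hx hx.1

theorem mul_lt_integral_of_strictAntiOn (hf : StrictAntiOn f (Icc a b)) (hab : a < b) :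
    (b - a) * f b < ∫ x in a..b, f x := by
  have hint : IntervalIntegrable f MeasureTheory.volume a b :=
    (hf.antitoneOn.mono (uIcc_of_le hab.le).subset).intervalIntegrable
  have hpos : 0 < ∫ x in a..b, (f x - f b) :=
    intervalIntegral.intervalIntegral_pos_of_pos_on (hint.sub intervalIntegrable_const)
      (fun x hx => sub_pos.2 (hf (Ioo_subset_Icc_self hx) ⟨hab.le, le_rfl⟩ hx.2)) hab
  rw [intervalIntegral.integral_sub hint intervalIntegrable_const,
    intervalIntegral.integral_const, smul_eq_mul] at hpos
  linarith

/-- A primitive of a strictly decreasing function is strictly concave, so its slopes from the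
origin strictly decrease. -/
theorem strictAntiOn_integral_div (hf : StrictAntiOn f (Icc 0 c)) :
    StrictAntiOn (fun r => (∫ x in 0..r, f x) / r) (Ioc 0 c) := by
  intro r hr s hs hrs
  have hint : ∀ {u v}, u ∈ Icc 0 c → v ∈ Icc 0 c → IntervalIntegrable f MeasureTheory.volume u v :=
    fun hu hv => (hf.antitoneOn.mono (uIcc_subset_Icc hu hv)).intervalIntegrable
  have hr' : r ∈ Icc 0 c := Ioc_subset_Icc_self hr
  have hs' : s ∈ Icc 0 c := Ioc_subset_Icc_self hs
  have hsplit : ∫ x in 0..s, f x = (∫ x in 0..r, f x) + ∫ x in r..s, f x :=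
    (intervalIntegral.integral_add_adjacent_intervals (hint ⟨le_rfl, hr.1.le.trans hr.2⟩ hr')
      (hint hr' hs')).symm
  have htail := integral_le_mul_of_antitoneOn (hf.antitoneOn.mono (Icc_subset_Icc hr.1.le hs.2))
    hrs.le
  have hhead := mul_lt_integral_of_strictAntiOn (hf.mono (Icc_subset_Icc le_rfl hr.2)) hr.1
  dsimp only
  rw [div_lt_div_iff₀ hs.1 hr.1, hsplit]
  nlinarith [mul_lt_mul_of_pos_left hhead (sub_pos.2 hrs), mul_le_mul_of_nonneg_left htail hr.1.le]

theorem continuousOn_primitive_of_antitoneOn (hf : AntitoneOn f (Icc 0 c)) (hc : 0 ≤ c) :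
    ContinuousOn (fun r => ∫ x in 0..r, f x) (Icc 0 c) := by
  rw [← uIcc_of_le hc]
  exact intervalIntegral.continuousOn_primitive_interval
    (by rw [uIcc_of_le hc]; exact hf.integrableOn_isCompact isCompact_Icc)

end AntitoneIntegral

noncomputable def powTail (c : ℕ → ℝ) (N : ℕ) (r : ℝ) : ℝ := ∑' k, c (N + k) * r ^ (N + k)

theorem summable_linear_mul_geometric {r : ℝ} (C : ℝ) (h0 : 0 ≤ r) (h1 : r < 1) :
    Summable fun j : ℕ => C * ((j : ℝ) + 1) * r ^ j := by
  have hr : ‖r‖ < 1 := by rwa [Real.norm_of_nonneg h0]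
  have hlin : Summable fun j : ℕ => (j : ℝ) * r ^ j := by
    simpa using summable_pow_mul_geometric_of_norm_lt_one (R := ℝ) 1 hr
  refine ((hlin.add (summable_geometric_of_lt_one h0 h1)).mul_left C).congr fun j => ?_
  ring

section PowTail

variable {c : ℕ → ℝ} {N : ℕ} {C : ℝ}

theorem summable_powTail_terms (hc : ∀ j ≥ N, 0 ≤ c j ∧ c j ≤ C * (j + 1)) {r : ℝ}
    (h0 : 0 ≤ r) (h1 : r < 1) : Summable fun k => c (N + k) * r ^ (N + k) := by
  refine .of_nonneg_of_le (fun k => mul_nonneg (hc _ (N.le_add_right k)).1 (by positivity))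
    (fun k => ?_) ((summable_linear_mul_geometric C h0 h1).comp_injective (add_right_injective N))
  simpa using mul_le_mul_of_nonneg_right (hc _ (N.le_add_right k)).2 (pow_nonneg h0 (N + k))

theorem powTail_nonneg (hc : ∀ j ≥ N, 0 ≤ c j) {r : ℝ} (h0 : 0 ≤ r) : 0 ≤ powTail c N r :=
  tsum_nonneg fun k => mul_nonneg (hc _ (N.le_add_right k)) (by positivity)

theorem mul_pow_le_powTail (hc : ∀ j ≥ N, 0 ≤ c j ∧ c j ≤ C * (j + 1)) {r : ℝ}
    (h0 : 0 ≤ r) (h1 : r < 1) : c N * r ^ N ≤ powTail c N r := by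
  simpa [powTail] using (summable_powTail_terms hc h0 h1).le_tsum 0
    fun k _ => mul_nonneg (hc _ (N.le_add_right k)).1 (by positivity)

theorem monotoneOn_powTail (hc : ∀ j ≥ N, 0 ≤ c j ∧ c j ≤ C * (j + 1)) :
    MonotoneOn (powTail c N) (Ico 0 1) := fun _ hr _ hs hrs =>
  (summable_powTail_terms hc hr.1 hr.2).tsum_le_tsum
    (fun k => mul_le_mul_of_nonneg_left (pow_le_pow_left₀ hr.1 hrs _) (hc _ (N.le_add_right k)).1)
    (summable_powTail_terms hc hs.1 hs.2)

theorem continuousOn_powTail (hc : ∀ j ≥ N, 0 ≤ c j ∧ c j ≤ C * (j + 1)) {b : ℝ}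
    (hb : b < 1) : ContinuousOn (powTail c N) (Icc 0 b) := by
  rcases lt_or_ge b 0 with hb0 | hb0
  · simp [Icc_eq_empty_of_lt hb0]
  refine continuousOn_tsum (fun k => (continuous_const.mul (continuous_pow _)).continuousOn)
    (summable_powTail_terms hc hb0 hb) fun k r hr => ?_
  rw [Real.norm_of_nonneg (mul_nonneg (hc _ (N.le_add_right k)).1 (pow_nonneg hr.1 _))]
  exact mul_le_mul_of_nonneg_left (pow_le_pow_left₀ hr.1 hr.2 _) (hc _ (N.le_add_right k)).1

/-- Comparing `j + 1 ≤ 2 ^ j` turns the tail into a geometric series with ratio `2 r`. -/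
theorem powTail_le_of_lt_half (hc : ∀ j ≥ N, 0 ≤ c j ∧ c j ≤ C * (j + 1)) {r : ℝ}
    (h0 : 0 ≤ r) (h1 : r < 1 / 2) : powTail c N r ≤ C * (2 * r) ^ N / (1 - 2 * r) := by
  have hC : 0 ≤ C := by
    have := (hc N le_rfl).1.trans (hc N le_rfl).2
    nlinarith
  have hgeom : HasSum (fun k => C * (2 * r) ^ N * (2 * r) ^ k) (C * (2 * r) ^ N / (1 - 2 * r)) := by
    simpa [div_eq_mul_inv] using
      (hasSum_geometric_of_lt_one (by positivity) (by linarith)).mul_left (C * (2 * r) ^ N)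
  refine (summable_powTail_terms hc h0 (by linarith)).tsum_le_tsum (fun k => ?_)
    hgeom.summable |>.trans_eq hgeom.tsum_eq
  have hj : ((N + k : ℕ) : ℝ) + 1 ≤ 2 ^ (N + k) := by exact_mod_cast Nat.lt_two_pow_self
  calc c (N + k) * r ^ (N + k) ≤ C * (((N + k : ℕ) : ℝ) + 1) * r ^ (N + k) :=
        mul_le_mul_of_nonneg_right (hc _ (N.le_add_right k)).2 (by positivity)
    _ ≤ C * 2 ^ (N + k) * r ^ (N + k) := by gcongr
    _ = C * (2 * r) ^ N * (2 * r) ^ k := by rw [mul_pow, mul_pow, pow_add, pow_add]; ring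

end PowTail

theorem prod_Icc_two_natCast_eq_factorial (k : ℕ) : ∏ j ∈ Finset.Icc 2 k, (j : ℝ) = k ! := by
  induction k with
  | zero => simp
  | succ k ih =>
    rcases Nat.lt_or_ge k 1 with hk | hk
    · obtain rfl : k = 0 := by omega
      simp
    · rw [Finset.prod_Icc_succ_top (by omega), ih, Nat.factorial_succ]
      push_cast
      ring

section Coefficients

variable {α : ℝ}

theorem coefA_pos (hα : α < 1) (k : ℕ) : 0 < coefA α k := by
  refine mul_pos (by positivity) (Finset.prod_pos fun j hj => ?_)
  have : (2 : ℝ) ≤ j := by exact_mod_cast (Finset.mem_Icc.1 hj).1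
  linarith

theorem coefA_le_one (hα0 : 0 ≤ α) (hα1 : α ≤ 1) (k : ℕ) : coefA α k ≤ 1 := by
  have hprod : ∏ j ∈ Finset.Icc 2 k, ((j : ℝ) - 2 * α) ≤ k ! := by
    rw [← prod_Icc_two_natCast_eq_factorial]
    refine Finset.prod_le_prod (fun j hj => ?_) fun j _ => by linarith
    have : (2 : ℝ) ≤ j := by exact_mod_cast (Finset.mem_Icc.1 hj).1
    linarith
  rw [coefA, one_div, inv_mul_le_iff₀ (by positivity), mul_one]
  exact hprod

/-- `k A_k(α)` with `k = j + 1`: the coefficient of `r ^ j` in the first series of `ψ`. -/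
noncomputable def psiCoeff₁ (α : ℝ) (j : ℕ) : ℝ := (j + 1) * coefA α (j + 1)

/-- `k (k - 1) / (k - 2α) · A_k(α)` with `k = j + 1`: the coefficient of `r ^ j` in the second
series of `ψ`. -/
noncomputable def psiCoeff₂ (α : ℝ) (j : ℕ) : ℝ := (j + 1) * j / (j + 1 - 2 * α) * coefA α (j + 1)

theorem psiCoeff₁_bounds (hα0 : 0 ≤ α) (hα1 : α < 1) (j : ℕ) :
    0 ≤ psiCoeff₁ α j ∧ psiCoeff₁ α j ≤ 2 * (j + 1) := by
  have hA := coefA_pos hα1 (j + 1)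
  have hA1 := coefA_le_one hα0 hα1.le (j + 1)
  constructor
  · unfold psiCoeff₁; positivity
  · unfold psiCoeff₁; nlinarith

theorem psiCoeff₂_bounds (hα0 : 0 ≤ α) (hα1 : α < 1) {j : ℕ} (hj : 2 ≤ j) :
    0 ≤ psiCoeff₂ α j ∧ psiCoeff₂ α j ≤ 2 * (j + 1) := by
  have hj' : (2 : ℝ) ≤ j := by exact_mod_cast hj
  have hden : 0 < (j : ℝ) + 1 - 2 * α := by linarith
  have hratio : (j + 1) * j / (j + 1 - 2 * α) ≤ 2 * (j + 1) := by
    rw [div_le_iff₀ hden]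
    nlinarith
  have hA := coefA_pos hα1 (j + 1)
  have hA1 := coefA_le_one hα0 hα1.le (j + 1)
  have hratio0 : 0 ≤ (j + 1) * j / (j + 1 - 2 * α) := by positivity
  constructor
  · unfold psiCoeff₂; positivity
  · unfold psiCoeff₂
    calc (j + 1) * j / (j + 1 - 2 * α) * coefA α (j + 1) ≤ (j + 1) * j / (j + 1 - 2 * α) :=
          mul_le_of_le_one_right hratio0 hA1
      _ ≤ 2 * (j + 1) := hratio

end Coefficients

theorem psiFun_eq_sub_powTail (n m : ℕ) (r α : ℝ) :
    psiFun n m r α = Afun r α - powTail (psiCoeff₁ α) n r - powTail (psiCoeff₂ α) m r := by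
  unfold psiFun powTail psiCoeff₁ psiCoeff₂
  congr 1
  · congr 1
    exact tsum_congr fun k => by push_cast; ring_nf
  · exact tsum_congr fun k => by push_cast; ring_nf

noncomputable def lIntegrand (α ρ : ℝ) : ℝ := (1 - ρ) * (1 + ρ) ^ (2 * α - 2)

section Afun

variable {α r : ℝ}

theorem lIntegrand_zero (α : ℝ) : lIntegrand α 0 = 1 := by
  simp [lIntegrand]

theorem strictAntiOn_lIntegrand (hα : α ≤ 1) : StrictAntiOn (lIntegrand α) (Icc 0 1) := by
  intro x hx y hy hxy
  have hpow : (1 + y) ^ (2 * α - 2) ≤ (1 + x) ^ (2 * α - 2) :=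
    Real.rpow_le_rpow_of_nonpos (by linarith [hx.1]) (by linarith) (by linarith)
  have hpos : 0 < (1 + y) ^ (2 * α - 2) := Real.rpow_pos_of_pos (by linarith [hy.1]) _
  calc (1 - y) * (1 + y) ^ (2 * α - 2) < (1 - x) * (1 + y) ^ (2 * α - 2) := by gcongr
    _ ≤ (1 - x) * (1 + x) ^ (2 * α - 2) := by gcongr; linarith [hx.2]

theorem lIntegrand_one_tenth_ge (hα : 0 ≤ α) : 90 / 121 ≤ lIntegrand α (1 / 10) := by
  have hpow : (1 + 1 / 10 : ℝ) ^ (-2 : ℝ) ≤ (1 + 1 / 10) ^ (2 * α - 2) :=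
    Real.rpow_le_rpow_of_exponent_le (by norm_num) (by linarith)
  rw [show (-2 : ℝ) = ((-2 : ℤ) : ℝ) by norm_num, Real.rpow_intCast] at hpow
  unfold lIntegrand
  norm_num at hpow ⊢
  linarith

theorem strictAntiOn_Lfun_div (hα : α ≤ 1) : StrictAntiOn (fun r => Lfun r α / r) (Ioc 0 1) :=
  strictAntiOn_integral_div (strictAntiOn_lIntegrand hα)

theorem Lfun_div_le_one (hα : α ≤ 1) (hr : r ∈ Ioc 0 1) : Lfun r α / r ≤ 1 := by
  have h := integral_le_mul_of_antitoneOn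
    ((strictAntiOn_lIntegrand hα).antitoneOn.mono (Icc_subset_Icc le_rfl hr.2)) hr.1.le
  rw [lIntegrand_zero, sub_zero, mul_one] at h
  rwa [div_le_one hr.1]

theorem lIntegrand_lt_Lfun_div (hα : α ≤ 1) (hr : r ∈ Ioc 0 1) : lIntegrand α r < Lfun r α / r := by
  have h := mul_lt_integral_of_strictAntiOn
    ((strictAntiOn_lIntegrand hα).mono (Icc_subset_Icc le_rfl hr.2)) hr.1
  rw [sub_zero] at h
  rwa [lt_div_iff₀ hr.1, mul_comm]

theorem Lfun_div_pos (hα : α ≤ 1) (hr : r ∈ Ioc 0 1) : 0 < Lfun r α / r := by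
  have h0 : 0 ≤ lIntegrand α r :=
    mul_nonneg (by linarith [hr.2]) (Real.rpow_nonneg (by linarith [hr.1]) _)
  exact h0.trans_lt (lIntegrand_lt_Lfun_div hα hr)

theorem Afun_eq (hr : r ≠ 0) : Afun r α = (1 - r ^ 2) * (Lfun r α / r) ^ 2 := by
  rw [Afun, div_pow]
  field_simp

theorem Afun_le (hα : α ≤ 1) (hr : r ∈ Ioc 0 1) : Afun r α ≤ 1 - r ^ 2 := by
  rw [Afun_eq hr.1.ne']
  have h1 : 0 ≤ 1 - r ^ 2 := by nlinarith [hr.1, hr.2]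
  have hsq : (Lfun r α / r) ^ 2 ≤ 1 :=
    pow_le_one₀ (Lfun_div_pos hα hr).le (Lfun_div_le_one hα hr)
  nlinarith

theorem strictAntiOn_Afun (hα : α ≤ 1) : StrictAntiOn (fun r => Afun r α) (Ioo 0 1) := by
  intro r hr s hs hrs
  have hr' : r ∈ Ioc 0 1 := Ioo_subset_Ioc_self hr
  have hs' : s ∈ Ioc 0 1 := Ioo_subset_Ioc_self hs
  simp only [Afun_eq hr.1.ne', Afun_eq hs.1.ne']
  have hfactor : 1 - s ^ 2 < 1 - r ^ 2 := by nlinarith [hr.1]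
  have hsq : (Lfun s α / s) ^ 2 < (Lfun r α / r) ^ 2 :=
    pow_lt_pow_left₀ (strictAntiOn_Lfun_div hα hr' hs' hrs) (Lfun_div_pos hα hs').le two_ne_zero
  exact mul_lt_mul'' hfactor hsq (by nlinarith [hs.2, hs.1]) (by positivity)

theorem one_half_lt_Afun_one_tenth (hα0 : 0 ≤ α) (hα1 : α ≤ 1) : 1 / 2 < Afun (1 / 10) α := by
  have hmem : (1 / 10 : ℝ) ∈ Ioc 0 1 := by norm_num
  have hlow : 90 / 121 < Lfun (1 / 10) α / (1 / 10) :=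
    (lIntegrand_one_tenth_ge hα0).trans_lt (lIntegrand_lt_Lfun_div hα1 hmem)
  rw [Afun_eq (by norm_num)]
  nlinarith

theorem continuousOn_Afun {a b : ℝ} (ha : 0 < a) (hα : α ≤ 1) (hb : b ≤ 1) :
    ContinuousOn (fun r => Afun r α) (Icc a b) := by
  have hL : ContinuousOn (fun r => Lfun r α) (Icc 0 1) :=
    continuousOn_primitive_of_antitoneOn (strictAntiOn_lIntegrand hα).antitoneOn zero_le_one
  refine ContinuousOn.mul ?_ ((hL.mono (Icc_subset_Icc ha.le hb)).pow 2)
  exact (continuousOn_const.sub (continuousOn_pow 2)).div (continuousOn_pow 2)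
    fun x hx => pow_ne_zero 2 (ha.trans_le hx.1).ne'

end Afun

section Psi

variable {n m : ℕ} {α : ℝ}

theorem strictAntiOn_psiFun (hα0 : 0 ≤ α) (hα1 : α < 1) (hm : 2 ≤ m) :
    StrictAntiOn (fun r => psiFun n m r α) (Ioo 0 1) := by
  intro r hr s hs hrs
  simp only [psiFun_eq_sub_powTail]
  have hA := strictAntiOn_Afun hα1.le hr hs hrs
  have h₁ := monotoneOn_powTail (fun j _ => psiCoeff₁_bounds hα0 hα1 j) (N := n)
    (Ioo_subset_Ico_self hr) (Ioo_subset_Ico_self hs) hrs.le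
  have h₂ := monotoneOn_powTail (fun j hj => psiCoeff₂_bounds hα0 hα1 (hm.trans hj))
    (Ioo_subset_Ico_self hr) (Ioo_subset_Ico_self hs) hrs.le
  linarith

theorem continuousOn_psiFun (hα0 : 0 ≤ α) (hα1 : α < 1) (hm : 2 ≤ m) {a b : ℝ} (ha : 0 < a)
    (hb : b < 1) : ContinuousOn (fun r => psiFun n m r α) (Icc a b) := by
  simp only [psiFun_eq_sub_powTail]
  have hsub : Icc a b ⊆ Icc 0 b := Icc_subset_Icc_left ha.le
  exact ((continuousOn_Afun ha hα1.le hb.le).sub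
    ((continuousOn_powTail (fun j _ => psiCoeff₁_bounds hα0 hα1 j) hb).mono hsub)).sub
    ((continuousOn_powTail (fun j hj => psiCoeff₂_bounds hα0 hα1 (hm.trans hj)) hb).mono hsub)

/-- Each series is at most `2 (1/5)^N / (4/5) ≤ 1/10` at `r = 1/10`, while `A(1/10) > 1/2`. -/
theorem psiFun_one_tenth_pos (hα0 : 0 ≤ α) (hα1 : α < 1) (hn : 2 ≤ n) (hm : 2 ≤ m) :
    0 < psiFun n m (1 / 10) α := by
  have hgeom : ∀ N, 2 ≤ N → 2 * (2 * (1 / 10 : ℝ)) ^ N / (1 - 2 * (1 / 10)) ≤ 1 / 10 := by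
    intro N hN
    have : (2 * (1 / 10 : ℝ)) ^ N ≤ (2 * (1 / 10)) ^ 2 :=
      pow_le_pow_of_le_one (by norm_num) (by norm_num) hN
    norm_num at this ⊢
    linarith
  have h₁ := (powTail_le_of_lt_half (fun j _ => psiCoeff₁_bounds hα0 hα1 j) (N := n)
    (by norm_num) (by norm_num)).trans (hgeom n hn)
  have h₂ := (powTail_le_of_lt_half (fun j hj => psiCoeff₂_bounds hα0 hα1 (hm.trans hj))
    (by norm_num) (by norm_num)).trans (hgeom m hm)
  rw [psiFun_eq_sub_powTail]
  linarith [one_half_lt_Afun_one_tenth hα0 hα1.le]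

theorem exists_psiFun_neg (hα0 : 0 ≤ α) (hα1 : α < 1) (hm : 2 ≤ m) :
    ∃ b ∈ Ioo (1 / 10 : ℝ) 1, psiFun n m b α < 0 := by
  set ε := psiCoeff₁ α n
  have hε : 0 < ε := mul_pos (by positivity) (coefA_pos hα1 _)
  have hlim : Tendsto (fun r : ℝ => 1 - r ^ 2 - ε * r ^ n) (𝓝[<] 1) (𝓝 (-ε)) := by
    have hcont : Continuous fun r : ℝ => 1 - r ^ 2 - ε * r ^ n := by fun_prop
    simpa using (hcont.tendsto 1).mono_left nhdsWithin_le_nhds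
  obtain ⟨b, hneg, hb⟩ :=
    ((hlim.eventually_lt_const (neg_neg_of_pos hε)).and
      (Ioo_mem_nhdsLT (show (1 / 10 : ℝ) < 1 by norm_num))).exists
  have hb0 : (0 : ℝ) ≤ b := by linarith [hb.1]
  refine ⟨b, hb, ?_⟩
  have hA := Afun_le hα1.le (α := α) ⟨by linarith [hb.1], hb.2.le⟩
  have h₁ := mul_pow_le_powTail (fun j _ => psiCoeff₁_bounds hα0 hα1 j) (N := n) hb0 hb.2
  have h₂ := powTail_nonneg (fun j hj => (psiCoeff₂_bounds hα0 hα1 (hm.trans hj)).1) (N := m) hb0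
  rw [psiFun_eq_sub_powTail]
  linarith

end Psi

/-- `ψ(n,m,·,α)` has a unique zero `r_{n,m}` in `(0,1)`, and is positive on
`(0, r_{n,m})`. -/
theorem psi_unique_zero (α : ℝ) (hα0 : 0 ≤ α) (hα1 : α < 1)
    (n m : ℕ) (hn : 2 ≤ n) (hm : 2 ≤ m) :
    ∃ rnm : ℝ, rnm ∈ Set.Ioo (0 : ℝ) 1 ∧ psiFun n m rnm α = 0 ∧
      (∀ r ∈ Set.Ioo (0 : ℝ) 1, psiFun n m r α = 0 → r = rnm) ∧
      (∀ r : ℝ, 0 < r → r < rnm → 0 < psiFun n m r α) := by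
  have hanti := strictAntiOn_psiFun (n := n) hα0 hα1 hm
  obtain ⟨b, hb, hψb⟩ := exists_psiFun_neg (n := n) hα0 hα1 hm
  obtain ⟨r₀, hr₀, hψr₀⟩ := intermediate_value_Icc' hb.1.le
    (continuousOn_psiFun hα0 hα1 hm (by norm_num) hb.2)
    ⟨hψb.le, (psiFun_one_tenth_pos hα0 hα1 hn hm).le⟩
  have hr₀' : r₀ ∈ Ioo (0 : ℝ) 1 := ⟨by linarith [hr₀.1], hr₀.2.trans_lt hb.2⟩
  refine ⟨r₀, hr₀', hψr₀, fun r hr hψr => hanti.injOn hr hr₀' (hψr.trans hψr₀.symm),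
    fun r hr hrr₀ => ?_⟩
  simpa [hψr₀] using hanti ⟨hr, hrr₀.trans hr₀'.2⟩ hr₀' hrr₀
end
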